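/- If B is an n×n invertible matrix and the n×m matrix A has rank m, then the general Gauss-Markov problem d = Ax + By has a unique solution (x, y) minimizing ‖y‖: x = (Aᵀ(BBᵀ)⁻¹A)⁻¹ Aᵀ(BBᵀ)⁻¹ d and y = Bᵀ(BBᵀ)⁻¹(d − Ax). -/
import Mathlib


open Matrix

lemma gm_dot_helper {k l : ℕ} (M : Matrix (Fin k) (Fin l) ℝ) (u : Fin l → ℝ) (v : Fin k → ℝ) :
    M.mulVec u ⬝ᵥ v = u ⬝ᵥ Mᵀ.mulVec v := by
  rw [Matrix.dotProduct_mulVec, Matrix.vecMul_transpose]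

theorem gauss_markov_unique_solution (n m : ℕ) (hmn : m ≤ n)
    (A : Matrix (Fin n) (Fin m) ℝ) (hA : A.rank = m)
    (B : Matrix (Fin n) (Fin n) ℝ) (hB : IsUnit B.det)
    (d : Fin n → ℝ)
    (W : Matrix (Fin n) (Fin n) ℝ) (hW : W = B * Bᵀ)
    (x : Fin m → ℝ)
    (hx : x = ((Aᵀ * W⁻¹ * A)⁻¹ * Aᵀ * W⁻¹).mulVec d)
    (y : Fin n → ℝ)
    (hy : y = (Bᵀ * W⁻¹).mulVec (d - A.mulVec x)) :
    A.mulVec x + B.mulVec y = d ∧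
      ∀ x' : Fin m → ℝ, ∀ y' : Fin n → ℝ, A.mulVec x' + B.mulVec y' = d →
        Real.sqrt (∑ i, y i ^ 2) ≤ Real.sqrt (∑ i, y' i ^ 2) ∧
          (Real.sqrt (∑ i, y' i ^ 2) = Real.sqrt (∑ i, y i ^ 2) → y' = y) := by
  have hWdet : IsUnit W.det := by
    rw [hW, det_mul, det_transpose]; exact hB.mul hB
  have hWinv : W * W⁻¹ = 1 := mul_nonsing_inv _ hWdet
  have hWT : Wᵀ = W := by rw [hW, transpose_mul, transpose_transpose]
  have hWiT : (W⁻¹)ᵀ = W⁻¹ := by rw [transpose_nonsing_inv, hWT]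
  -- the pair (x,y) solves the equation
  have hsol : A.mulVec x + B.mulVec y = d := by
    rw [hy, mulVec_mulVec, ← Matrix.mul_assoc, ← hW, hWinv, one_mulVec]
    abel
  -- invertibility of M = Aᵀ W⁻¹ A
  have hBinvdet : IsUnit B⁻¹.det := isUnit_nonsing_inv_det _ hB
  have hMeq : Aᵀ * W⁻¹ * A = (B⁻¹ * A)ᵀ * (B⁻¹ * A) := by
    simp only [hW, Matrix.mul_inv_rev, transpose_mul, transpose_nonsing_inv, Matrix.mul_assoc]
  have hr : (Aᵀ * W⁻¹ * A).rank = m := by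
    rw [hMeq, rank_transpose_mul_self, rank_mul_eq_right_of_isUnit_det _ _ hBinvdet, hA]
  have hMunit : IsUnit (Aᵀ * W⁻¹ * A) := by
    rw [← Matrix.mulVec_injective_iff_isUnit]
    have hsurj : Function.Surjective (Aᵀ * W⁻¹ * A).mulVecLin := by
      rw [← LinearMap.range_eq_top]
      apply Submodule.eq_top_of_finrank_eq
      exact hr.trans (by simp)
    exact (LinearMap.injective_iff_surjective).mpr hsurj
  have hM1 : Aᵀ * W⁻¹ * A * (Aᵀ * W⁻¹ * A)⁻¹ = 1 :=
    mul_nonsing_inv _ ((isUnit_iff_isUnit_det _).mp hMunit)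
  -- the key orthogonality residual identity
  have hmat : Aᵀ * W⁻¹ * A * ((Aᵀ * W⁻¹ * A)⁻¹ * Aᵀ * W⁻¹) = Aᵀ * W⁻¹ := by
    simp only [← Matrix.mul_assoc]
    rw [hM1, Matrix.one_mul]
  have hkey : (Aᵀ * W⁻¹).mulVec (d - A.mulVec x) = 0 := by
    rw [mulVec_sub, hx, mulVec_mulVec, mulVec_mulVec, hmat, sub_self]
  refine ⟨hsol, fun x' y' h' => ?_⟩
  have hBv : B.mulVec (y' - y) = A.mulVec (x - x') := by
    have h1 : B.mulVec y' = d - A.mulVec x' := by rw [← h']; abel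
    have h2 : B.mulVec y = d - A.mulVec x := by rw [← hsol]; abel
    rw [mulVec_sub, h1, h2, mulVec_sub]; abel
  have horth : y ⬝ᵥ (y' - y) = 0 := by
    nth_rewrite 1 [hy]
    rw [gm_dot_helper, transpose_mul, hWiT, transpose_transpose, ← mulVec_mulVec, hBv,
      mulVec_mulVec, dotProduct_comm, gm_dot_helper, transpose_mul, hWiT,
      hkey, dotProduct_zero]
  have horth' : ∑ i, y i * (y' i - y i) = 0 := by simpa [dotProduct] using horth
  have hsum : ∑ i, y' i ^ 2 = ∑ i, y i ^ 2 + ∑ i, (y' i - y i) ^ 2 := by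
    have expand : ∀ i ∈ Finset.univ, y' i ^ 2 =
        y i ^ 2 + 2 * (y i * (y' i - y i)) + (y' i - y i) ^ 2 := fun i _ => by ring
    rw [Finset.sum_congr rfl expand, Finset.sum_add_distrib, Finset.sum_add_distrib,
      ← Finset.mul_sum, horth']
    ring
  have hnn : (0:ℝ) ≤ ∑ i, (y' i - y i) ^ 2 := Finset.sum_nonneg fun i _ => sq_nonneg _
  have hle : ∑ i, y i ^ 2 ≤ ∑ i, y' i ^ 2 := by rw [hsum]; linarith
  refine ⟨Real.sqrt_le_sqrt hle, fun heq => ?_⟩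
  have h1 : ∑ i, y' i ^ 2 = ∑ i, y i ^ 2 := by
    have := (Real.sqrt_inj (Finset.sum_nonneg fun i _ => sq_nonneg (y' i))
      (Finset.sum_nonneg fun i _ => sq_nonneg (y i))).mp heq
    exact this
  have hz : ∑ i, (y' i - y i) ^ 2 = 0 := by rw [hsum] at h1; linarith
  funext i
  have := (Finset.sum_eq_zero_iff_of_nonneg fun i _ => sq_nonneg (y' i - y i)).mp hz i
    (Finset.mem_univ i)
  have := pow_eq_zero_iff (n := 2) (by norm_num) |>.mp this
  linarith [this]
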